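/- In the two-worker extended mechanism, truthful reporting is the unique weakly dominant action for each worker type: for each worker i and each true type θ ∈ {B,E}, the report θ is weakly dominant (its payoff is ≥ that of every other report against every opponent report), and no report r ≠ θ is weakly dominant (for each such r there exists an opponent report r' against which the payoff from r is strictly less than the payoff from some other report). -/
import Mathlib

/-- Worker types: beginner or expert. -/
inductive WorkerType | B | E
deriving DecidableEq

/-- Contracts: salary High/Low paired with task Mixed/Delicate/Perfunctory. -/
inductive Contract | HM | HD | LM | LP
deriving DecidableEq

/-- A worker's payoff from a contract, given the worker's own type. -/
def payoff : Contract → WorkerType → ℝ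
  | .HM, .E => 4
  | .HD, .E => 2
  | .LM, .E => 1
  | .LP, .E => 0
  | .HM, .B => 4
  | .HD, .B => 2
  | .LM, .B => 2
  | .LP, .B => 4

/-- The direct mechanism: a pair of reports ↦ (worker 1's contract, worker 2's contract). -/
def directPair : WorkerType → WorkerType → Contract × Contract
  | .B, .B => (.LM, .LM)
  | .B, .E => (.LP, .HD)
  | .E, .B => (.HD, .LP)
  | .E, .E => (.HM, .HM)

/-- Contract assigned by the direct mechanism to worker `i` under report profile `r`. -/
def directM (r : Fin 2 → WorkerType) (i : Fin 2) : Contract :=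
  if i = 0 then (directPair (r 0) (r 1)).1 else (directPair (r 0) (r 1)).2

/-- Reports in the extended mechanism: beginner, expert, or leave unanswered. -/
inductive Report | B | E | U
deriving DecidableEq

/-- The report naming a worker's type. -/
def toRep : WorkerType → Report
  | .B => .B
  | .E => .E

/-- The extended mechanism: a pair of reports ↦ (worker 1's contract, worker 2's contract). -/
def extPair : Report → Report → Contract × Contract
  | .B, .B => (.LM, .LM)
  | .B, .E => (.LP, .HD)
  | .E, .B => (.HD, .LP)
  | .E, .E => (.HM, .HM)
  | .B, .U => (.LP, .HD)
  | .E, .U => (.HD, .LP)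
  | .U, .B => (.HD, .LP)
  | .U, .E => (.LP, .HD)
  | .U, .U => (.LM, .LM)

/-- Contract assigned by the extended mechanism to worker `i` under report profile `r`. -/
def extM (r : Fin 2 → Report) (i : Fin 2) : Contract :=
  if i = 0 then (extPair (r 0) (r 1)).1 else (extPair (r 0) (r 1)).2

/-- A report `r` is weakly dominant for worker `i` of type `θ` in the extended
mechanism if, against every opponent report and every alternative own report
(encoded via the profile `m`), playing `r` is at least as good. -/
def WeaklyDominantExt (i : Fin 2) (θ : WorkerType) (r : Report) : Prop :=
  ∀ m : Fin 2 → Report,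
    payoff (extM (Function.update m i r) i) θ ≥ payoff (extM m i) θ

/-- In the extended mechanism, truthful reporting is the unique weakly dominant
action for each worker type. -/
theorem truthful_unique_weakly_dominant_ext :
    ∀ (i : Fin 2) (θ : WorkerType),
      WeaklyDominantExt i θ (toRep θ) ∧
      ∀ r : Report, r ≠ toRep θ → ¬ WeaklyDominantExt i θ r := by
  intro i θ
  constructor
  · intro m
    fin_cases i <;> cases θ <;>
      cases h0 : m 0 <;> cases h1 : m 1 <;>
        simp [extM, extPair, payoff, toRep, Function.update, Fin.ext_iff, h0, h1] <;>
        norm_num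
  · intro r hr h
    fin_cases i <;> cases θ <;> cases r <;> simp [toRep] at hr <;>
      [ (have := h (fun j => if j = 0 then Report.B else Report.U));
        (have := h (fun j => if j = 0 then Report.B else Report.U));
        (have := h (fun _ => Report.E));
        (have := h (fun _ => Report.E));
        (have := h (fun j => if j = 1 then Report.B else Report.U));
        (have := h (fun j => if j = 1 then Report.B else Report.U));
        (have := h (fun _ => Report.E));
        (have := h (fun _ => Report.E)) ] <;>
      simp [extM, extPair, payoff, Function.update, Fin.ext_iff] at this <;>
      norm_num at this
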